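/- Let q = 1/2 and let p ∈ Δ_2 with p_1 = p_2. Then G^n(p) converges to (0, 0, 1) as n → ∞. -/

import Mathlib

/-!
On the diagonal `x₁ = x₂` of the simplex, `G` (with `q = 1/2`) acts through its first coordinate
as the logistic map `a ↦ a (1 - a)`. On `(0, 1)` the partial fraction identity
`1 / (a (1 - a)) = 1 / a + 1 / (1 - a)` shows that each step raises `1 / a` by at least `1`,
so the `n`-th iterate is at most `1 / (1 / a + n)` and tends to `0`.
-/

open Filter Topology

/-- The map G = (G₁,G₂,G₃) on ℝ³ (with parameter q):
G₁(x) = x₁² + 2q x₁ x₃, G₂(x) = x₂² + 2q x₂ x₃,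
G₃(x) = x₃² + 2 x₁ x₂ + 2(1−q) x₁ x₃ + 2(1−q) x₂ x₃. -/
noncomputable def Gmap (q : ℝ) (x : ℝ × ℝ × ℝ) : ℝ × ℝ × ℝ :=
  (x.1 ^ 2 + 2 * q * x.1 * x.2.2,
   x.2.1 ^ 2 + 2 * q * x.2.1 * x.2.2,
   x.2.2 ^ 2 + 2 * x.1 * x.2.1 + 2 * (1 - q) * x.1 * x.2.2
     + 2 * (1 - q) * x.2.1 * x.2.2)

/-- The open simplex Δ₂ ⊆ ℝ³. -/
def simplex2 : Set (ℝ × ℝ × ℝ) :=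
  {p | p.1 + p.2.1 + p.2.2 = 1 ∧ 0 < p.1 ∧ 0 < p.2.1 ∧ 0 < p.2.2}

open Set

noncomputable def logistic (x : ℝ) : ℝ := x * (1 - x)

def simplexDiag (a : ℝ) : ℝ × ℝ × ℝ := (a, a, 1 - 2 * a)

lemma continuous_simplexDiag : Continuous simplexDiag := by
  unfold simplexDiag
  fun_prop

lemma semiconj_simplexDiag_logistic :
    Function.Semiconj simplexDiag logistic (Gmap (1 / 2)) := by
  intro a
  simp only [simplexDiag, logistic, Gmap, Prod.mk.injEq]
  refine ⟨by ring, by ring, by ring⟩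

lemma mapsTo_logistic_Ioo : MapsTo logistic (Ioo 0 1) (Ioo 0 1) := by
  rintro x ⟨hx0, hx1⟩
  exact ⟨mul_pos hx0 (by linarith), by unfold logistic; nlinarith⟩

lemma inv_add_one_le_inv_logistic {x : ℝ} (hx : x ∈ Ioo 0 1) :
    x⁻¹ + 1 ≤ (logistic x)⁻¹ := by
  obtain ⟨hx0, hx1⟩ := hx
  have hx1' : 0 < 1 - x := by linarith
  have partial_fractions : (logistic x)⁻¹ = x⁻¹ + (1 - x)⁻¹ := by
    unfold logistic
    field_simp
    ring
  rw [partial_fractions]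
  gcongr
  exact one_le_inv₀ hx1' |>.mpr (by linarith)

lemma inv_add_natCast_le_inv_iterate_logistic {a : ℝ} (ha : a ∈ Ioo 0 1) (n : ℕ) :
    a⁻¹ + n ≤ (logistic^[n] a)⁻¹ := by
  induction n with
  | zero => simp
  | succ n ih =>
    rw [Function.iterate_succ_apply', Nat.cast_succ, ← add_assoc]
    exact (add_le_add_left ih 1).trans
      (inv_add_one_le_inv_logistic (mapsTo_logistic_Ioo.iterate n ha))

lemma tendsto_iterate_logistic {a : ℝ} (ha : a ∈ Ioo 0 1) :
    Tendsto (fun n => logistic^[n] a) atTop (𝓝 0) := by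
  have inv_tendsto : Tendsto (fun n => (logistic^[n] a)⁻¹) atTop atTop :=
    tendsto_atTop_mono (inv_add_natCast_le_inv_iterate_logistic ha)
      (tendsto_atTop_add_const_left _ _ tendsto_natCast_atTop_atTop)
  simpa only [Function.comp_def, inv_inv] using tendsto_inv_atTop_zero.comp inv_tendsto

/-- If q = 1/2 and p₁ = p₂, then G^n(p) → (0,0,1). -/
theorem tendsto_critical_diagonal (p : ℝ × ℝ × ℝ) (hp : p ∈ simplex2)
    (h12 : p.1 = p.2.1) :
    Tendsto (fun n => (Gmap (1 / 2))^[n] p) atTop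
      (𝓝 ((0 : ℝ), (0 : ℝ), (1 : ℝ))) := by
  obtain ⟨hsum, hp1, -, hp3⟩ := hp
  have hp_diag : p = simplexDiag p.1 := by
    ext <;> simp only [simplexDiag] <;> linarith
  have hp1_mem : p.1 ∈ Ioo 0 1 := ⟨hp1, by linarith⟩
  have hlim : Tendsto (fun n => simplexDiag (logistic^[n] p.1)) atTop (𝓝 (simplexDiag 0)) :=
    (continuous_simplexDiag.tendsto 0).comp (tendsto_iterate_logistic hp1_mem)
  rw [hp_diag]
  convert hlim using 2 with n
  · exact (semiconj_simplexDiag_logistic.iterate_right n p.1).symm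
  · norm_num [simplexDiag]
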